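/- For c ∈ L^n, the set I_c = {P ∈ L[Z;θ] : P(c_i) = 0 for i = 1,...,n} is a left ideal of the skew polynomial ring L[Z;θ], and the θ-degree of its monic generator of minimal degree equals the rank weight of c. -/

import Mathlib

/-!
Skew evaluation satisfies `(R · P)(x) = R(P(x))`, so annihilators form a left ideal.
The key bound is `dim_K {x : P(x) = 0} ≤ deg P` for `P ≠ 0`. If `P(v) = 0` with `v ≠ 0`, then
`P(v x) = Q(θ x - x)` for some `Q` of degree `deg P - 1`. Since the fixed field of `θ` is `K`,
the map `x ↦ θ x - x` has kernel `K`, so each degree adds at most one dimension.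
Conversely, if `g = P(a) ≠ 0`, then `(Z - θ(g)/g) · P`, which is
`X * P.map θ - C (θ g / g) * P`, kills `a` and all roots of `P` at the cost of one more degree.
Building the annihilator of `c₁, …, c_n` element by element therefore gives degree at most the
rank weight, and the bound gives equality and minimality.
-/

open Polynomial

/-- The skew product of θ-polynomials. -/
noncomputable def skewMul {K L : Type*} [Field K] [Field L] [Algebra K L]
    (θ : L ≃ₐ[K] L) (P Q : Polynomial L) : Polynomial L :=
  P.sum fun i a => Q.sum fun j b => Polynomial.monomial (i + j) (a * (θ ^ i) b)

/-- Evaluation of a θ-polynomial at `g`. -/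
noncomputable def skewEval {K L : Type*} [Field K] [Field L] [Algebra K L]
    (θ : L ≃ₐ[K] L) (P : Polynomial L) (g : L) : L :=
  P.sum fun i a => a * (θ ^ i) g

section SkewEval

variable {K L : Type*} [Field K] [Field L] [Algebra K L] (θ : L ≃ₐ[K] L)

theorem skewEval_eq_lsum (P : L[X]) (x : L) :
    skewEval θ P x = lsum (fun i => LinearMap.mulRight L ((θ ^ i) x)) P := rfl

theorem skewEval_add (P Q : L[X]) (x : L) :
    skewEval θ (P + Q) x = skewEval θ P x + skewEval θ Q x := by
  simp only [skewEval_eq_lsum, map_add]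

theorem skewEval_sub (P Q : L[X]) (x : L) :
    skewEval θ (P - Q) x = skewEval θ P x - skewEval θ Q x := by
  simp only [skewEval_eq_lsum, map_sub]

theorem skewEval_C_mul (a : L) (P : L[X]) (x : L) :
    skewEval θ (C a * P) x = a * skewEval θ P x := by
  simp only [skewEval_eq_lsum, ← smul_eq_C_mul, map_smul, smul_eq_mul]

theorem skewEval_monomial (i : ℕ) (a x : L) :
    skewEval θ (monomial i a) x = a * (θ ^ i) x :=
  sum_monomial_index a _ (zero_mul _)

theorem skewEval_C (a x : L) : skewEval θ (C a) x = a * x := by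
  rw [← monomial_zero_left, skewEval_monomial, pow_zero, AlgEquiv.one_apply]

theorem skewEval_one_right (P : L[X]) : skewEval θ P 1 = P.eval 1 := by
  simp [skewEval, eval_eq_sum]

theorem skewEval_mul_X (P : L[X]) (x : L) : skewEval θ (P * X) x = skewEval θ P (θ x) := by
  induction P using Polynomial.induction_on' with
  | add P Q hP hQ => rw [add_mul, skewEval_add, skewEval_add, hP, hQ]
  | monomial i a =>
    rw [monomial_mul_X, skewEval_monomial, skewEval_monomial, pow_succ, AlgEquiv.mul_apply]

theorem skewEval_X_mul_map (P : L[X]) (x : L) :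
    skewEval θ (X * P.map (θ : L →+* L)) x = θ (skewEval θ P x) := by
  induction P using Polynomial.induction_on' with
  | add P Q hP hQ => rw [Polynomial.map_add, mul_add, skewEval_add, skewEval_add, hP, hQ, map_add]
  | monomial i a =>
    rw [map_monomial, X_mul_monomial, skewEval_monomial, skewEval_monomial, map_mul, pow_succ',
      AlgEquiv.mul_apply]
    rfl

theorem skewEval_X_mul_map_sub_C_mul (P : L[X]) (a x : L) :
    skewEval θ (X * P.map (θ : L →+* L) - C a * P) x =
      θ (skewEval θ P x) - a * skewEval θ P x := by
  rw [skewEval_sub, skewEval_X_mul_map, skewEval_C_mul]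

noncomputable def skewEvalₗ (P : L[X]) : L →ₗ[K] L where
  toFun := skewEval θ P
  map_add' x y := by
    simp only [skewEval, ← sum_add, map_add, mul_add]
  map_smul' k x := by
    simp only [skewEval, sum_def, RingHom.id_apply, Finset.smul_sum, map_smul, mul_smul_comm]

@[simp]
theorem skewEvalₗ_apply (P : L[X]) (x : L) : skewEvalₗ θ P x = skewEval θ P x := rfl

theorem skewEval_skewMul (R P : L[X]) (x : L) :
    skewEval θ (skewMul θ R P) x = skewEval θ R (skewEval θ P x) := by
  rw [skewMul, sum_def, skewEval_eq_lsum, map_sum]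
  conv_rhs => rw [skewEval, sum_def]
  refine Finset.sum_congr rfl fun i _ => ?_
  rw [sum_def, map_sum, skewEval, sum_def, map_sum, Finset.mul_sum]
  refine Finset.sum_congr rfl fun j _ => ?_
  rw [← skewEval_eq_lsum, skewEval_monomial, map_mul, pow_add, AlgEquiv.mul_apply, mul_assoc]

theorem coeff_skewMul_C (P : L[X]) (v : L) (i : ℕ) :
    (skewMul θ P (C v)).coeff i = P.coeff i * (θ ^ i) v := by
  have hC : ∀ a : L, ∀ i : ℕ, ((C v).sum fun j b => monomial (i + j) (a * (θ ^ i) b))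
      = monomial i (a * (θ ^ i) v) := fun a i => by simp [sum_C_index]
  simp only [skewMul, hC]
  simp +contextual [sum_def, finsetSum_coeff, coeff_monomial]

end SkewEval

namespace Polynomial

variable {L : Type*} [Field L] (f : L →+* L)

theorem natDegree_X_mul_map_sub_C_mul {P : L[X]} (hP : P ≠ 0) (a : L) :
    (X * P.map f - C a * P).natDegree = P.natDegree + 1 := by
  have hdeg : (X * P.map f).natDegree = P.natDegree + 1 := by
    rw [natDegree_X_mul ((Polynomial.map_ne_zero_iff f.injective).mpr hP), natDegree_map]
  rw [natDegree_sub_eq_left_of_natDegree_lt (hdeg ▸ Nat.lt_succ_of_le (natDegree_C_mul_le a P)),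
    hdeg]

theorem Monic.X_mul_map_sub_C_mul {P : L[X]} (hP : P.Monic) (a : L) :
    (X * P.map f - C a * P).Monic := by
  refine (monic_X.mul (hP.map f)).sub_of_left (degree_lt_degree ?_)
  rw [natDegree_X_mul (hP.map f).ne_zero, Polynomial.natDegree_map]
  exact Nat.lt_succ_of_le (natDegree_C_mul_le a P)

end Polynomial

section Annihilators

variable {K L : Type*} [Field K] [Field L] [Algebra K L] (θ : L ≃ₐ[K] L)

theorem exists_skewEval_mul_left_eq {P : L[X]} (hP : P ≠ 0) {v : L} (hv : v ≠ 0)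
    (hPv : skewEval θ P v = 0) :
    ∃ Q : L[X], Q ≠ 0 ∧ Q.natDegree + 1 = P.natDegree ∧
      ∀ x, skewEval θ P (v * x) = skewEval θ Q (θ x - x) := by
  -- `B = ∑ aᵢ θⁱ(v) Zⁱ` satisfies `B(x) = P(v x)`; its coefficient sum is `P(v) = 0`, so
  -- `B = (Z - 1) Q` as ordinary polynomials, and `(Z - 1) Q` evaluates to `Q(θ x - x)`.
  set B := skewMul θ P (C v)
  have hBeval : ∀ x, skewEval θ B x = skewEval θ P (v * x) := fun x => by
    rw [skewEval_skewMul, skewEval_C]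
  have hBlead : B.coeff P.natDegree ≠ 0 := by
    rw [coeff_skewMul_C]
    exact mul_ne_zero (leadingCoeff_ne_zero.mpr hP) ((_root_.map_ne_zero _).mpr hv)
  have hBdeg : B.natDegree = P.natDegree := by
    refine natDegree_eq_of_le_of_coeff_ne_zero ?_ hBlead
    refine natDegree_le_iff_coeff_eq_zero.mpr fun i hi => ?_
    rw [coeff_skewMul_C, coeff_eq_zero_of_natDegree_lt hi, zero_mul]
  have hB0 : B ≠ 0 := fun h => hBlead (by rw [h, coeff_zero])
  have hroot : B.IsRoot 1 := by
    rw [IsRoot, ← skewEval_one_right θ, hBeval, mul_one, hPv]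
  set Q := B /ₘ (X - C 1)
  have hBQ : (X - C 1) * Q = B := mul_divByMonic_eq_iff_isRoot.mpr hroot
  have hQ0 : Q ≠ 0 := fun h => hB0 (by rw [← hBQ, h, mul_zero])
  refine ⟨Q, hQ0, ?_, fun x => ?_⟩
  · rw [← hBdeg, ← hBQ, (monic_X_sub_C 1).natDegree_mul' hQ0, natDegree_X_sub_C, add_comm]
  · rw [← hBeval, ← hBQ, map_one, show (X - 1 : L[X]) * Q = Q * X - Q by ring, skewEval_sub,
      skewEval_mul_X, ← skewEvalₗ_apply, ← skewEvalₗ_apply, ← skewEvalₗ_apply, map_sub]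

theorem finrank_le_natDegree_of_le_ker
    (hθ : ∀ x : L, θ x = x → x ∈ Set.range (algebraMap K L)) {P : L[X]} (hP : P ≠ 0)
    (V : Submodule K L) [FiniteDimensional K V]
    (hV : V ≤ LinearMap.ker (skewEvalₗ θ P)) : Module.finrank K V ≤ P.natDegree := by
  induction hm : P.natDegree using Nat.strong_induction_on generalizing P V with
  | _ m ih =>
  obtain rfl | hVne := eq_or_ne V ⊥
  · simp
  obtain ⟨v, hvV, hv0⟩ := Submodule.exists_mem_ne_zero_of_ne_bot hVne
  obtain ⟨Q, hQ0, hQdeg, hPQ⟩ := exists_skewEval_mul_left_eq θ hP hv0 (hV hvV)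
  let f : V →ₗ[K] L :=
    ((θ.toLinearMap - LinearMap.id) ∘ₗ LinearMap.mulLeft K v⁻¹).domRestrict V
  have hrange : LinearMap.range f ≤ LinearMap.ker (skewEvalₗ θ Q) := by
    rintro _ ⟨⟨y, hy⟩, rfl⟩
    have := hPQ (v⁻¹ * y)
    rw [mul_inv_cancel_left₀ hv0, ← skewEvalₗ_apply, hV hy] at this
    simpa [f] using this.symm
  have hker : Module.finrank K (LinearMap.ker f) ≤ 1 := by
    refine finrank_le_one ⟨⟨v, hvV⟩, by simp [f, hv0]⟩ fun ⟨⟨y, hyV⟩, hy⟩ => ?_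
    obtain ⟨k, hk⟩ := hθ (v⁻¹ * y) (by simpa [f, sub_eq_zero] using hy)
    refine ⟨k, Subtype.ext (Subtype.ext ?_)⟩
    simp [Algebra.smul_def, hk, mul_comm v⁻¹, inv_mul_cancel_right₀ hv0]
  calc Module.finrank K V
      = Module.finrank K (LinearMap.range f) + Module.finrank K (LinearMap.ker f) :=
        f.finrank_range_add_finrank_ker.symm
    _ ≤ Q.natDegree + 1 := add_le_add (ih _ (by omega) hQ0 _ hrange rfl) hker
    _ = m := hQdeg.trans hm

theorem exists_monic_le_ker_skewEvalₗ (s : Finset L) :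
    ∃ P : L[X], P.Monic ∧ Submodule.span K (s : Set L) ≤ LinearMap.ker (skewEvalₗ θ P) ∧
      P.natDegree ≤ Module.finrank K (Submodule.span K (s : Set L)) := by
  classical
  induction s using Finset.induction_on with
  | empty => exact ⟨1, monic_one, by simp, by simp⟩
  | insert a s _ ih =>
    obtain ⟨P, hPm, hPs, hPdeg⟩ := ih
    rw [Finset.coe_insert, Submodule.span_insert]
    by_cases ha : skewEval θ P a = 0
    · exact ⟨P, hPm, sup_le ((Submodule.span_singleton_le_iff_mem _ _).mpr ha) hPs,
        hPdeg.trans (Submodule.finrank_mono le_sup_right)⟩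
    set g := skewEval θ P a
    set P' := X * P.map (θ : L →+* L) - C (θ g / g) * P
    have haP' : skewEval θ P' a = 0 := by
      rw [skewEval_X_mul_map_sub_C_mul, div_mul_cancel₀ _ ha, sub_self]
    have hsP' : Submodule.span K s ≤ LinearMap.ker (skewEvalₗ θ P') := fun x hx => by
      have := hPs hx
      simp_all [P', skewEval_X_mul_map_sub_C_mul]
    have hlt : Submodule.span K s < K ∙ a ⊔ Submodule.span K s :=
      SetLike.lt_iff_le_and_exists.mpr ⟨le_sup_right, a,
        Submodule.mem_sup_left (Submodule.mem_span_singleton_self a), fun h => ha (hPs h)⟩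
    refine ⟨P', hPm.X_mul_map_sub_C_mul _ _,
      sup_le ((Submodule.span_singleton_le_iff_mem _ _).mpr haP') hsP', ?_⟩
    rw [natDegree_X_mul_map_sub_C_mul _ hPm.ne_zero]
    exact (Nat.succ_le_succ hPdeg).trans (Submodule.finrank_lt_finrank_of_lt hlt)

end Annihilators

theorem mem_range_algebraMap_of_apply_eq_self {K L : Type*} [Field K] [Field L] [Algebra K L]
    [IsGalois K L] {θ : L ≃ₐ[K] L} (hgen : ∀ σ : L ≃ₐ[K] L, σ ∈ Subgroup.zpowers θ)
    {x : L} (hx : θ x = x) : x ∈ Set.range (algebraMap K L) :=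
  (InfiniteGalois.mem_range_algebraMap_iff_fixed x).mpr fun σ =>
    Subgroup.zpowers_le (H := MulAction.stabilizer _ x) |>.mpr hx (hgen σ)

theorem ideal_of_annihilators_and_min_generator_general
    {K L : Type*} [Field K] [Field L] [Algebra K L] [IsGalois K L]
    (n : ℕ)
    (θ : L ≃ₐ[K] L)
    (hgen : ∀ σ : L ≃ₐ[K] L, σ ∈ Subgroup.zpowers θ)
    (c : Fin n → L) :
    (∀ P Q : Polynomial L, (∀ i, skewEval θ P (c i) = 0) →
        (∀ i, skewEval θ Q (c i) = 0) → ∀ i, skewEval θ (P + Q) (c i) = 0) ∧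
    (∀ R P : Polynomial L, (∀ i, skewEval θ P (c i) = 0) →
        ∀ i, skewEval θ (skewMul θ R P) (c i) = 0) ∧
    (∃ P : Polynomial L, P.Monic ∧ (∀ i, skewEval θ P (c i) = 0) ∧
        P.natDegree = Module.finrank K (Submodule.span K (Set.range c)) ∧
        ∀ Q : Polynomial L, Q ≠ 0 → (∀ i, skewEval θ Q (c i) = 0) →
          P.natDegree ≤ Q.natDegree) := by
  classical
  have hθ : ∀ x : L, θ x = x → x ∈ Set.range (algebraMap K L) := fun _ =>
    mem_range_algebraMap_of_apply_eq_self hgen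
  have hspan : ∀ Q : L[X], (∀ i, skewEval θ Q (c i) = 0) →
      Submodule.span K (Set.range c) ≤ LinearMap.ker (skewEvalₗ θ Q) := fun Q hQ =>
    Submodule.span_le.mpr (Set.range_subset_iff.mpr hQ)
  have := FiniteDimensional.span_of_finite K (Set.finite_range c)
  obtain ⟨P, hPm, hPc, hPdeg⟩ := exists_monic_le_ker_skewEvalₗ θ (Finset.univ.image c)
  rw [show (Finset.univ.image c : Set L) = Set.range c by simp] at hPc hPdeg
  have hrank : P.natDegree = Module.finrank K (Submodule.span K (Set.range c)) :=
    hPdeg.antisymm (finrank_le_natDegree_of_le_ker θ hθ hPm.ne_zero _ hPc)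
  refine ⟨fun P Q hP hQ i => by rw [skewEval_add, hP, hQ, add_zero],
    fun R P hP i => by rw [skewEval_skewMul, hP, ← skewEvalₗ_apply, map_zero],
    P, hPm, fun i => hPc (Submodule.subset_span ⟨i, rfl⟩), hrank,
    fun Q hQ0 hQ => hrank ▸ finrank_le_natDegree_of_le_ker θ hθ hQ0 _ (hspan Q hQ)⟩

/-- `I_c = {P ∈ L[Z;θ] : P(cᵢ) = 0 for all i}` is a left ideal of `L[Z;θ]`
(closed under addition and left skew multiplication), and the monic element of
minimal θ-degree in `I_c` has θ-degree equal to the rank weight of `c`,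
i.e. `dim_K span_K {c₁,…,c_n}`. -/
theorem ideal_of_annihilators_and_min_generator
    {K L : Type*} [Field K] [Field L] [Algebra K L] [IsGalois K L]
    (n : ℕ) (hn : Module.finrank K L = n)
    (θ : L ≃ₐ[K] L) (hord : orderOf θ = n)
    (hgen : ∀ σ : L ≃ₐ[K] L, σ ∈ Subgroup.zpowers θ)
    (c : Fin n → L) :
    (∀ P Q : Polynomial L, (∀ i, skewEval θ P (c i) = 0) →
        (∀ i, skewEval θ Q (c i) = 0) → ∀ i, skewEval θ (P + Q) (c i) = 0) ∧
    (∀ R P : Polynomial L, (∀ i, skewEval θ P (c i) = 0) →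
        ∀ i, skewEval θ (skewMul θ R P) (c i) = 0) ∧
    (∃ P : Polynomial L, P.Monic ∧ (∀ i, skewEval θ P (c i) = 0) ∧
        P.natDegree = Module.finrank K (Submodule.span K (Set.range c)) ∧
        ∀ Q : Polynomial L, Q ≠ 0 → (∀ i, skewEval θ Q (c i) = 0) →
          P.natDegree ≤ Q.natDegree) :=
  ideal_of_annihilators_and_min_generator_general n θ hgen c
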